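/- SEP ≡_W WKL ≤_W EC ≡_W lim: the separation problem is continuously Weihrauch equivalent to weak Kőnig's lemma, which is continuously Weihrauch reducible to EC, and EC is continuously Weihrauch equivalent to the limit problem on Baire space. -/

import Mathlib

open Filter Topology

abbrev Baire : Type := ℕ → ℕ

/-- The pairing `⟨p,q⟩(2n) = p(n)`, `⟨p,q⟩(2n+1) = q(n)`. -/
def pairB (p q : Baire) : Baire := fun n => if n % 2 = 0 then p (n / 2) else q (n / 2)

/-- A problem: a partial multivalued function on Baire space. -/
structure Problem where
  dom : Set Baire
  sol : Baire → Set Baire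

/-- Continuous Weihrauch reducibility. -/
def WRed (f g : Problem) : Prop :=
  ∃ (Kd Hd : Set Baire) (K H : Baire → Baire),
    ContinuousOn K Kd ∧ ContinuousOn H Hd ∧
      ∀ p ∈ f.dom, p ∈ Kd ∧ K p ∈ g.dom ∧
        ∀ q ∈ g.sol (K p), pairB p q ∈ Hd ∧ H (pairB p q) ∈ f.sol p

/-- Strong continuous Weihrauch reducibility. -/
def SWRed (f g : Problem) : Prop :=
  ∃ (Kd Hd : Set Baire) (K H : Baire → Baire),
    ContinuousOn K Kd ∧ ContinuousOn H Hd ∧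
      ∀ p ∈ f.dom, p ∈ Kd ∧ K p ∈ g.dom ∧
        ∀ q ∈ g.sol (K p), q ∈ Hd ∧ H q ∈ f.sol p

def WEquiv (f g : Problem) : Prop := WRed f g ∧ WRed g f
def SWEquiv (f g : Problem) : Prop := SWRed f g ∧ SWRed g f
def WLt (f g : Problem) : Prop := WRed f g ∧ ¬ WRed g f

/-- `range(p-1)`. -/
def rangeM (p : Baire) : Set ℕ := {n | ∃ i, p i = n + 1}

/-- Characteristic function of a set of naturals. -/
noncomputable def chi (A : Set ℕ) : Baire := A.indicator fun _ => 1

noncomputable def EC : Problem where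
  dom := Set.univ
  sol := fun p => {chi (rangeM p)}

noncomputable def EC1 : Problem where
  dom := {p | ((rangeM p)ᶜ).encard ≤ 1}
  sol := fun p => {chi (rangeM p)}

def pfst (r : Baire) : Baire := fun n => r (2 * n)
def psnd (r : Baire) : Baire := fun n => r (2 * n + 1)

noncomputable def SEP : Problem where
  dom := {r | rangeM (pfst r) ∩ rangeM (psnd r) = ∅}
  sol := fun r =>
    {s | ∃ A : Set ℕ, s = chi A ∧ rangeM (pfst r) ⊆ A ∧ A ⊆ (rangeM (psnd r))ᶜ}

noncomputable def SEP1 : Problem where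
  dom := {r | rangeM (pfst r) ∩ rangeM (psnd r) = ∅ ∧
    ((rangeM (pfst r) ∪ rangeM (psnd r))ᶜ).encard ≤ 1}
  sol := SEP.sol

/- rationals -/
def ratEnum (i : ℕ) : ℚ :=
  ((i.unpair.1 : ℚ) - (i.unpair.2.unpair.1 : ℚ)) / ((i.unpair.2.unpair.2 : ℚ) + 1)

def rhoCauchy (p : Baire) (x : ℝ) : Prop :=
  ∀ n, |(ratEnum (p n) : ℝ) - x| ≤ (2 : ℝ) ^ (-(n : ℤ))

def rhoNaive (p : Baire) (x : ℝ) : Prop :=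
  Tendsto (fun n => ((ratEnum (p n) : ℝ))) atTop (nhds x)

def rhoLt (p : Baire) (x : ℝ) : Prop := rangeM p = {n | (ratEnum n : ℝ) < x}
def rhoGt (p : Baire) (x : ℝ) : Prop := rangeM p = {n | x < (ratEnum n : ℝ)}

def rhoCfLt (p : Baire) (x : ℝ) : Prop :=
  (∀ n, p n ≤ 1) ∧ ∀ n, (p n = 1 ↔ (ratEnum n : ℝ) < x)
def rhoCfGt (p : Baire) (x : ℝ) : Prop :=
  (∀ n, p n ≤ 1) ∧ ∀ n, (p n = 1 ↔ x < (ratEnum n : ℝ))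

noncomputable def cfTail : List ℕ → ℝ
  | [] => 0
  | b :: l => 1 / ((b : ℝ) + cfTail l)

noncomputable def cfApprox (p : Baire) (k : ℕ) : ℝ :=
  ((Denumerable.ofNat ℤ (p 0) : ℤ) : ℝ) + cfTail ((List.range k).map fun i => p (i + 1))

def rhoCf (p : Baire) (x : ℝ) : Prop :=
  ((∀ i, 1 ≤ i → 1 ≤ p i) ∧ Tendsto (cfApprox p) atTop (nhds x)) ∨
    (∃ k, 1 ≤ k ∧ p k = 0 ∧ (∀ i, 1 ≤ i → i < k → 1 ≤ p i) ∧
      (2 ≤ k → 2 ≤ p (k - 1)) ∧ x = cfApprox p (k - 1))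

def rhoDec (p : Baire) (x : ℝ) : Prop :=
  (∀ n, 1 ≤ n → p n ≤ 9) ∧
    x = ((Denumerable.ofNat ℤ (p 0) : ℤ) : ℝ) + ∑' n : ℕ, (p (n + 1) : ℝ) / 10 ^ (n + 1)

/-- The implication problem between two representations of ℝ. -/
def implProblem (d1 d2 : Baire → ℝ → Prop) : Problem where
  dom := {p | ∃ x, d1 p x}
  sol := fun p => {q | ∃ x, d1 p x ∧ d2 q x}

/- trees / WKL / choice on Cantor space -/
def wordCode : List Bool → ℕ
  | [] => 0
  | b :: w => 2 * wordCode w + (if b then 2 else 1)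

def prefixList (x : Baire) (k : ℕ) : List Bool := (List.range k).map fun i => decide (x i = 1)

def isTreeCode (t : Baire) : Prop :=
  (∀ n, t n ≤ 1) ∧
    ∀ w v : List Bool, w <+: v → t (wordCode v) = 1 → t (wordCode w) = 1

def WKL : Problem where
  dom := {t | isTreeCode t ∧ {w : List Bool | t (wordCode w) = 1}.Infinite}
  sol := fun t => {x | (∀ n, x n ≤ 1) ∧ ∀ k, t (wordCode (prefixList x k)) = 1}

def Ap (p : Baire) : Set Baire :=
  {x | (∀ n, x n ≤ 1) ∧ ∀ k, wordCode (prefixList x k) ∉ rangeM p}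

def CCantor : Problem where
  dom := {p | (Ap p).Nonempty}
  sol := Ap

def Cle2 : Problem where
  dom := {p | (Ap p).Nonempty ∧ (Ap p).encard ≤ 2}
  sol := Ap

/- limit and parallelization -/
def projCount (r : Baire) (n : ℕ) : Baire := fun k => r (Nat.pair n k)

def limP : Problem where
  dom := {r | ∃ q : Baire, ∀ k, Tendsto (fun n => projCount r n k) atTop (nhds (q k))}
  sol := fun r => {q | ∀ k, Tendsto (fun n => projCount r n k) atTop (nhds (q k))}

def parallel (f : Problem) : Problem where
  dom := {r | ∀ n, projCount r n ∈ f.dom}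
  sol := fun r => {s | ∀ n, projCount s n ∈ f.sol (projCount r n)}

def MCT : Problem where
  dom := {r | ∃ xs : ℕ → ℝ, (∀ n, rhoCauchy (projCount r n) (xs n)) ∧
    Monotone xs ∧ BddAbove (Set.range xs)}
  sol := fun r => {q | ∃ xs : ℕ → ℝ, (∀ n, rhoCauchy (projCount r n) (xs n)) ∧
    Monotone xs ∧ BddAbove (Set.range xs) ∧ rhoCauchy q (⨆ n, xs n)}

/- SORT and RAT -/
open Classical in
noncomputable def sortOut (p : Baire) : Baire := fun k =>
  if {i | p i = 0}.Infinite then 0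
  else if k < {i | p i = 0}.ncard then 0 else 1

noncomputable def SORT : Problem where
  dom := {p | ∀ n, p n ≤ 1}
  sol := fun p => {sortOut p}

def znk (n : ℕ) : Baire := fun k => if k < n then 0 else 1

def RAT : Problem where
  dom := {p | ∃ x, rhoCauchy p x}
  sol := fun p => {s | ∃ x, rhoCauchy p x ∧
    ((∃ n, x = (ratEnum n : ℝ) ∧ s = znk n) ∨
      ((∀ r : ℚ, x ≠ (r : ℝ)) ∧ s = fun _ => 0))}

/- omniscience principles -/
def projFin (m i : ℕ) (r : Baire) : Baire := fun k => r (m * k + i - 1)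
def isZeroSeq (p : Baire) : Prop := ∀ k, p k = 0
def constSeq (i : ℕ) : Baire := fun _ => i

noncomputable def LPOn (n : ℕ) : Problem where
  dom := Set.univ
  sol := fun r => {constSeq ({i | 1 ≤ i ∧ i ≤ n ∧ isZeroSeq (projFin n i r)}.ncard)}

def LLPOn (n : ℕ) : Problem where
  dom := {r | {i | 1 ≤ i ∧ i ≤ n ∧ ¬ isZeroSeq (projFin n i r)}.encard ≤ 1}
  sol := fun r => {s | ∃ i, 1 ≤ i ∧ i ≤ n ∧ isZeroSeq (projFin n i r) ∧ s = constSeq i}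

def MLPOn (n : ℕ) : Problem where
  dom := {r | ∃ i, 1 ≤ i ∧ i ≤ n ∧ isZeroSeq (projFin n i r)}
  sol := fun r => {s | ∃ i, 1 ≤ i ∧ i ≤ n ∧ isZeroSeq (projFin n i r) ∧ s = constSeq i}

def LPO : Problem where
  dom := Set.univ
  sol := fun p => {s | (isZeroSeq p ∧ s = constSeq 1) ∨ (¬ isZeroSeq p ∧ s = constSeq 0)}

/- choice problems on ℕ etc. -/
def Cfin (n : ℕ) : Problem where
  dom := {p | ∃ i, i < n ∧ i ∉ rangeM p}
  sol := fun p => {s | ∃ i, i < n ∧ i ∉ rangeM p ∧ s = constSeq i}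

def ACCfin (n : ℕ) : Problem where
  dom := {p | (∃ i, i < n ∧ i ∉ rangeM p) ∧ ({i | i < n} ∩ rangeM p).encard ≤ 1}
  sol := (Cfin n).sol

def CNat : Problem where
  dom := {p | ∃ i, i ∉ rangeM p}
  sol := fun p => {s | ∃ i, i ∉ rangeM p ∧ s = constSeq i}

/- differentiation -/
instance : Countable (AddMonoidAlgebra ℚ ℕ) :=
  AddMonoidAlgebra.coeff_injective.countable

instance : Countable (Polynomial ℚ) :=
  Polynomial.toFinsupp_injective.countable

noncomputable def polyEnum : ℕ → Polynomial ℚ :=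
  (exists_surjective_nat (Polynomial ℚ)).choose

noncomputable def polyFun (k : ℕ) : C(Set.Icc (0:ℝ) 1, ℝ) :=
  ⟨fun x => ((polyEnum k).map (algebraMap ℚ ℝ)).eval (x : ℝ),
   (((polyEnum k).map (algebraMap ℚ ℝ)).continuous).comp continuous_subtype_val⟩

noncomputable def deltaC (p : Baire) (f : C(Set.Icc (0:ℝ) 1, ℝ)) : Prop :=
  ∀ n, ‖f - polyFun (p n)‖ ≤ (2 : ℝ) ^ (-(n : ℤ))

def IsDerivOn (f g : C(Set.Icc (0:ℝ) 1, ℝ)) : Prop :=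
  ∀ x : Set.Icc (0:ℝ) 1,
    HasDerivWithinAt (Set.IccExtend (by norm_num : (0:ℝ) ≤ 1) f) (g x) (Set.Icc 0 1) (x : ℝ)

noncomputable def diffP : Problem where
  dom := {p | ∃ f g, deltaC p f ∧ IsDerivOn f g}
  sol := fun p => {q | ∃ f g, deltaC p f ∧ IsDerivOn f g ∧ deltaC q g}

/-!
Every reduction map is continuous because each of its output digits depends on finitely many
input digits.

EC ≤ lim: the characteristic function of an enumerated set is the pointwise limit of its finite
stages. lim ≤ EC: enumerate the pairs `⟨k, n⟩` such that coordinate `k` still changes after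
stage `n`; their characteristic function yields, for each `k`, a stage from which coordinate `k`
is constant.

WKL ≤ EC: the dead words of a tree (those without extensions of some length) can be enumerated,
and knowing which words are dead one walks down the tree always into a live child.
SEP ≤ WKL: the separators of two disjoint enumerated sets are the paths through the tree of words
that the enumerations have not yet contradicted. WKL ≤ SEP: separate the words whose left child
dies first from those whose right child dies first; walking right on 1 and left on 0, a separator
never leads into a dead subtree.
-/

open Classical Set

lemma isLocallyConstant_apply (i : ℕ) : IsLocallyConstant fun t : Baire => t i :=
  (IsLocallyConstant.iff_continuous _).2 (continuous_apply i)

lemma isLocallyConstant_of_finite_use {α : Type*} {F : Baire → α}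
    (h : ∀ s, ∃ S : Set ℕ, S.Finite ∧ ∀ t, (∀ i ∈ S, t i = s i) → F t = F s) :
    IsLocallyConstant F := by
  refine (IsLocallyConstant.iff_eventually_eq F).2 fun s => ?_
  obtain ⟨S, hS, hF⟩ := h s
  filter_upwards [hS.eventually_all.2 fun i _ => (isLocallyConstant_apply i).eventually_eq s]
    using hF

lemma IsLocallyConstant.apply_self {g : Baire → ℕ} (hg : IsLocallyConstant g) :
    IsLocallyConstant fun t : Baire => t (g t) := by
  refine (IsLocallyConstant.iff_eventually_eq _).2 fun s => ?_
  filter_upwards [hg.eventually_eq s, (isLocallyConstant_apply (g s)).eventually_eq s]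
    with t hg ht
  rw [hg, ht]

@[simp] lemma pfst_pairB (p q : Baire) : pfst (pairB p q) = p := by
  ext n
  simp [pfst, pairB]

@[simp] lemma psnd_pairB (p q : Baire) : psnd (pairB p q) = q := by
  ext n
  simp [psnd, pairB, show (2 * n + 1) / 2 = n by omega]

lemma continuous_psnd : Continuous psnd :=
  continuous_pi fun _ => continuous_apply _

lemma Continuous.pairB {f g : Baire → Baire} (hf : Continuous f) (hg : Continuous g) :
    Continuous fun t => pairB (f t) (g t) :=
  continuous_pi fun n => by
    by_cases hn : n % 2 = 0 <;> simp only [_root_.pairB, hn, if_true, if_false]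
    exacts [(continuous_apply _).comp hf, (continuous_apply _).comp hg]

lemma chi_apply (A : Set ℕ) (n : ℕ) : chi A n = if n ∈ A then 1 else 0 := by
  simp [chi, indicator_apply]

@[simp] lemma chi_ne_zero_iff {A : Set ℕ} {n : ℕ} : chi A n ≠ 0 ↔ n ∈ A := by
  rw [chi_apply]; split_ifs <;> simp_all

lemma chi_eq_one_iff {A : Set ℕ} {n : ℕ} : chi A n = 1 ↔ n ∈ A := by
  rw [chi_apply]; split_ifs <;> simp_all

lemma WRed.of_continuous {f g : Problem} {K H : Baire → Baire} (hK : Continuous K)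
    (hH : Continuous H) (h : ∀ p ∈ f.dom, K p ∈ g.dom ∧ ∀ q ∈ g.sol (K p), H q ∈ f.sol p) :
    WRed f g :=
  ⟨univ, univ, K, H ∘ psnd, hK.continuousOn, (hH.comp continuous_psnd).continuousOn,
    fun p hp => ⟨trivial, (h p hp).1, fun q hq => ⟨trivial, by simpa using (h p hp).2 q hq⟩⟩⟩

noncomputable def existsEnum (c : ℕ → ℕ → Prop) : Baire :=
  fun j => if c j.unpair.1 j.unpair.2 then j.unpair.1 + 1 else 0

lemma rangeM_existsEnum (c : ℕ → ℕ → Prop) : rangeM (existsEnum c) = {m | ∃ k, c m k} := by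
  ext m
  constructor
  · rintro ⟨j, hj⟩
    unfold existsEnum at hj
    split_ifs at hj with hc
    exact ⟨j.unpair.2, by rwa [← Nat.succ_injective hj]⟩
  · rintro ⟨k, hk⟩
    exact ⟨Nat.pair m k, by simp [existsEnum, hk]⟩

lemma continuous_existsEnum {c : Baire → ℕ → ℕ → Prop}
    (hc : ∀ m k, IsLocallyConstant fun t => c t m k) : Continuous fun t => existsEnum (c t) :=
  continuous_pi fun j => ((hc _ _).comp fun b => if b then j.unpair.1 + 1 else 0).continuous

section Trees

lemma wordCode_injective : Function.Injective wordCode := by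
  intro v w h
  induction v generalizing w with
  | nil => cases w with
    | nil => rfl
    | cons b w => simp only [wordCode] at h; split_ifs at h
  | cons a v ih => cases w with
    | nil => simp only [wordCode] at h; split_ifs at h
    | cons b w =>
      simp only [wordCode] at h
      cases a <;> cases b <;> simp only [Bool.false_eq_true, if_true, if_false] at h <;>
        first | omega | exact congrArg _ (ih (by omega))

noncomputable def wordDecode : ℕ → List Bool := Function.invFun wordCode

@[simp] lemma wordDecode_wordCode (w : List Bool) : wordDecode (wordCode w) = w :=
  Function.leftInverse_invFun wordCode_injective w

def DiesAt (t : Baire) (w : List Bool) (k : ℕ) : Prop :=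
  ∀ u : List Bool, u.length = k → t (wordCode (w ++ u)) ≠ 1

def Alive (t : Baire) (w : List Bool) : Prop := ∀ k, ¬ DiesAt t w k

lemma isLocallyConstant_diesAt (w : List Bool) (k : ℕ) :
    IsLocallyConstant fun t => DiesAt t w k :=
  isLocallyConstant_of_finite_use fun _ =>
    ⟨(fun u => wordCode (w ++ u)) '' {u | u.length = k}, (List.finite_length_eq Bool k).image _,
      fun _ ht => propext <| forall₂_congr fun u hu => by rw [ht _ ⟨u, hu, rfl⟩]⟩

variable {t : Baire} {w : List Bool}

lemma DiesAt.mono (ht : isTreeCode t) {k k' : ℕ} (h : DiesAt t w k) (hk : k ≤ k') :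
    DiesAt t w k' := fun u hu hmem =>
  h (u.take k) (by simp; omega)
    (ht.2 _ _ (List.prefix_append_right_inj _ |>.2 (List.take_prefix k u)) hmem)

lemma Alive.mem (h : Alive t w) : t (wordCode w) = 1 := by
  by_contra hw
  exact h 0 fun u hu => by simpa [List.length_eq_zero_iff.1 hu] using hw

lemma Alive.child (ht : isTreeCode t) (h : Alive t w) :
    Alive t (w ++ [false]) ∨ Alive t (w ++ [true]) := by
  by_contra hc
  simp only [not_or, Alive, not_forall, not_not] at hc
  obtain ⟨⟨k₀, h₀⟩, ⟨k₁, h₁⟩⟩ := hc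
  refine h (max k₀ k₁ + 1) fun | [], hu => by simp at hu | b :: u, hu => ?_
  rw [show w ++ b :: u = w ++ [b] ++ u by simp]
  simp only [List.length_cons, Nat.add_right_cancel_iff] at hu
  cases b
  exacts [h₀.mono ht (by omega) u rfl, h₁.mono ht (by omega) u rfl]

lemma alive_nil (ht : isTreeCode t) (hinf : {w : List Bool | t (wordCode w) = 1}.Infinite) :
    Alive t [] := by
  intro k hk
  refine hinf ((List.finite_length_lt Bool k).subset fun v hv => ?_)
  by_contra hlen
  exact hk (v.take k) (by simp at hlen ⊢; omega) (ht.2 _ _ (List.take_prefix k v) hv)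

end Trees

def greedyPrefix (d : List Bool → Bool) : ℕ → List Bool
  | 0 => []
  | n + 1 => greedyPrefix d n ++ [d (greedyPrefix d n)]

def greedyPath (d : List Bool → Bool) (n : ℕ) : ℕ := (d (greedyPrefix d n)).toNat

lemma prefixList_greedyPath (d : List Bool → Bool) (k : ℕ) :
    prefixList (greedyPath d) k = greedyPrefix d k := by
  induction k with
  | zero => rfl
  | succ k ih =>
    rw [prefixList, List.range_succ, List.map_append, ← prefixList, ih]
    cases h : d (greedyPrefix d k) <;> simp [greedyPrefix, greedyPath, h]

lemma greedyPath_mem_WKL_sol {t : Baire} {d : List Bool → Bool} (hroot : Alive t [])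
    (hstep : ∀ w, Alive t w → Alive t (w ++ [d w])) : greedyPath d ∈ WKL.sol t := by
  have halive : ∀ n, Alive t (greedyPrefix d n) := fun n => by
    induction n with
    | zero => exact hroot
    | succ n ih => exact hstep _ ih
  exact ⟨fun n => Bool.toNat_le _, fun k => by rw [prefixList_greedyPath]; exact (halive k).mem⟩

lemma continuous_greedyPath_apply (c : List Bool → ℕ) :
    Continuous fun q : Baire => greedyPath fun w => q (c w) ≠ 0 := by
  have hprefix : ∀ n, IsLocallyConstant fun q : Baire =>
      greedyPrefix (fun w => q (c w) ≠ 0) n := by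
    intro n
    induction n with
    | zero => exact IsLocallyConstant.const _
    | succ n ih => exact ih.comp₂ (ih.comp c).apply_self fun w b => w ++ [decide (b ≠ 0)]
  exact continuous_pi fun n =>
    (((hprefix n).comp c).apply_self.comp fun b => (decide (b ≠ 0)).toNat).continuous

noncomputable def ecStage (p : Baire) (j : ℕ) : ℕ :=
  if ∃ i < j.unpair.1, p i = j.unpair.2 + 1 then 1 else 0

lemma continuous_ecStage : Continuous ecStage :=
  continuous_pi fun j => by
    refine (isLocallyConstant_of_finite_use fun _ => ⟨Iio j.unpair.1, finite_Iio _, ?_⟩).continuous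
    intro t ht
    simp only [ecStage]
    congr 1
    exact propext <| exists_congr fun i => and_congr_right fun hi => by rw [ht i hi]

lemma tendsto_ecStage (p : Baire) (k : ℕ) :
    Tendsto (fun n => projCount (ecStage p) n k) atTop (𝓝 (chi (rangeM p) k)) := by
  simp only [projCount, ecStage, Nat.unpair_pair, chi_apply]
  by_cases hk : k ∈ rangeM p
  · obtain ⟨i, hi⟩ := hk
    exact tendsto_atTop_of_eventually_const (i₀ := i + 1) fun n hn => by
      rw [if_pos ⟨i, by omega, hi⟩, if_pos ⟨i, hi⟩]
  · exact tendsto_atTop_of_eventually_const (i₀ := 0) fun n _ => by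
      rw [if_neg fun ⟨i, _, hi⟩ => hk ⟨i, hi⟩, if_neg hk]

lemma wRed_EC_limP : WRed EC limP :=
  WRed.of_continuous continuous_ecStage continuous_id fun p _ =>
    ⟨⟨_, tendsto_ecStage p⟩, fun _ hq => funext fun k =>
      tendsto_nhds_unique (hq k) (tendsto_ecStage p k)⟩

noncomputable def limChanges (r : Baire) : Baire :=
  existsEnum fun j i =>
    j.unpair.2 < i ∧ r (Nat.pair i j.unpair.1) ≠ r (Nat.pair j.unpair.2 j.unpair.1)

/-- On `⟨r, χ⟩`, with `χ` the characteristic function of `rangeM (limChanges r)`: the value of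
`r` at the first stage after which coordinate `k` is constant. -/
noncomputable def limOfChanges (s : Baire) (k : ℕ) : ℕ :=
  if h : ∃ n, psnd s (Nat.pair k n) = 0 then pfst s (Nat.pair (Nat.find h) k) else 0

lemma pair_mem_rangeM_limChanges {r : Baire} {k n : ℕ} :
    Nat.pair k n ∈ rangeM (limChanges r) ↔ ∃ i, n < i ∧ r (Nat.pair i k) ≠ r (Nat.pair n k) := by
  simp [limChanges, rangeM_existsEnum]

lemma continuous_limChanges : Continuous limChanges :=
  continuous_existsEnum fun j i => (isLocallyConstant_apply _).comp₂ (isLocallyConstant_apply _)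
    fun a b => j.unpair.2 < i ∧ a ≠ b

lemma continuousOn_limOfChanges :
    ContinuousOn limOfChanges {s | ∀ k, ∃ n, psnd s (Nat.pair k n) = 0} := by
  refine continuousOn_pi.2 fun k s hs => ?_
  rw [ContinuousWithinAt, nhds_discrete, tendsto_pure]
  set n₀ := Nat.find (hs k)
  have hsnd : ∀ᶠ t in 𝓝 s, ∀ n ∈ Iic n₀, t (2 * Nat.pair k n + 1) = s (2 * Nat.pair k n + 1) :=
    (finite_Iic n₀).eventually_all.2 fun n _ => (isLocallyConstant_apply _).eventually_eq s
  filter_upwards [self_mem_nhdsWithin, nhdsWithin_le_nhds hsnd,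
    nhdsWithin_le_nhds ((isLocallyConstant_apply (2 * Nat.pair n₀ k)).eventually_eq s)]
    with t ht hsnd hfst
  have hfind : Nat.find (ht k) = n₀ := by
    rw [Nat.find_eq_iff]
    refine ⟨(hsnd n₀ (mem_Iic.2 le_rfl)).trans (Nat.find_spec (hs k)), fun n hn h => ?_⟩
    exact Nat.find_min (hs k) hn ((hsnd n (mem_Iic.2 hn.le)).symm.trans h)
  simp only [limOfChanges, dif_pos (ht k), dif_pos (hs k), hfind]
  exact hfst

lemma exists_pair_not_mem_rangeM_limChanges {r : Baire} (hr : r ∈ limP.dom) (k : ℕ) :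
    ∃ n, Nat.pair k n ∉ rangeM (limChanges r) := by
  obtain ⟨q, hq⟩ := hr
  obtain ⟨N, hN⟩ := eventually_atTop.1 (tendsto_pure.1 (nhds_discrete ℕ ▸ hq k))
  exact ⟨N, pair_mem_rangeM_limChanges.not.2 fun ⟨i, hi, hne⟩ =>
    hne ((hN i hi.le).trans (hN N le_rfl).symm)⟩

lemma tendsto_of_pair_not_mem_rangeM_limChanges {r : Baire} {k n : ℕ}
    (h : Nat.pair k n ∉ rangeM (limChanges r)) :
    Tendsto (fun m => projCount r m k) atTop (𝓝 (r (Nat.pair n k))) := by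
  simp only [pair_mem_rangeM_limChanges, not_exists, not_and, not_not] at h
  refine tendsto_atTop_of_eventually_const fun m (hm : n ≤ m) => ?_
  rcases hm.eq_or_lt with rfl | hlt
  exacts [rfl, h m hlt]

lemma wRed_limP_EC : WRed limP EC := by
  refine ⟨univ, _, limChanges, limOfChanges, continuous_limChanges.continuousOn,
    continuousOn_limOfChanges, fun r hr => ⟨trivial, trivial, ?_⟩⟩
  rintro _ rfl
  have hsnd : ∀ k n, psnd (pairB r (chi (rangeM (limChanges r)))) (Nat.pair k n) = 0 ↔
      Nat.pair k n ∉ rangeM (limChanges r) := by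
    simp [chi_apply]
  have hstable : ∀ k, ∃ n, psnd (pairB r (chi (rangeM (limChanges r)))) (Nat.pair k n) = 0 :=
    fun k => (exists_pair_not_mem_rangeM_limChanges hr k).imp fun n => (hsnd k n).2
  refine ⟨hstable, fun k => ?_⟩
  simp only [limOfChanges, dif_pos (hstable k), pfst_pairB]
  exact tendsto_of_pair_not_mem_rangeM_limChanges ((hsnd k _).1 (Nat.find_spec (hstable k)))

noncomputable def deadWords (t : Baire) : Baire :=
  existsEnum fun m k => DiesAt t (wordDecode m) k

lemma continuous_deadWords : Continuous deadWords :=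
  continuous_existsEnum fun m k => isLocallyConstant_diesAt (wordDecode m) k

lemma wordCode_mem_rangeM_deadWords {t : Baire} {w : List Bool} :
    wordCode w ∈ rangeM (deadWords t) ↔ ¬ Alive t w := by
  simp [deadWords, rangeM_existsEnum, Alive]

lemma wRed_WKL_EC : WRed WKL EC := by
  refine WRed.of_continuous continuous_deadWords
    (continuous_greedyPath_apply fun w => wordCode (w ++ [false])) fun t ⟨ht, hinf⟩ =>
      ⟨trivial, ?_⟩
  rintro _ rfl
  -- go right exactly when the left child is dead
  refine greedyPath_mem_WKL_sol (alive_nil ht hinf) fun w hw => ?_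
  simp only [chi_ne_zero_iff, wordCode_mem_rangeM_deadWords]
  by_cases h : Alive t (w ++ [false])
  · simp [h]
  · simpa [h] using (hw.child ht).resolve_left h

def SepConsistent (r : Baire) (w : List Bool) : Prop :=
  ∀ j < w.length, ∀ i < w.length,
    (pfst r i = j + 1 → w.getD j false = true) ∧ (psnd r i = j + 1 → w.getD j false = false)

noncomputable def sepTree (r : Baire) (m : ℕ) : ℕ :=
  if SepConsistent r (wordDecode m) then 1 else 0

lemma sepTree_wordCode_eq_one {r : Baire} {w : List Bool} :
    sepTree r (wordCode w) = 1 ↔ SepConsistent r w := by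
  simp [sepTree]

lemma isLocallyConstant_sepConsistent (w : List Bool) :
    IsLocallyConstant fun r => SepConsistent r w := by
  refine isLocallyConstant_of_finite_use fun s => ⟨Iio (2 * w.length), finite_Iio _, fun t ht => ?_⟩
  have hfst : ∀ i < w.length, pfst t i = pfst s i := fun i hi => ht _ (by simp; omega)
  have hsnd : ∀ i < w.length, psnd t i = psnd s i := fun i hi => ht _ (by simp; omega)
  exact propext <| forall₂_congr fun j _ => forall₂_congr fun i hi => by rw [hfst i hi, hsnd i hi]

lemma continuous_sepTree : Continuous sepTree :=
  continuous_pi fun _ =>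
    ((isLocallyConstant_sepConsistent _).comp fun b => if b then 1 else 0).continuous

lemma isTreeCode_sepTree (r : Baire) : isTreeCode (sepTree r) := by
  refine ⟨fun n => by unfold sepTree; split_ifs <;> simp, ?_⟩
  rintro w _ ⟨u, rfl⟩
  simp only [sepTree_wordCode_eq_one]
  intro h j hj i hi
  have := h j (by simp; omega) i (by simp; omega)
  rwa [List.getD_append _ _ _ _ hj] at this

@[simp] lemma length_prefixList (x : Baire) (k : ℕ) : (prefixList x k).length = k := by
  simp [prefixList]

lemma prefixList_getD {x : Baire} {k j : ℕ} (h : j < k) :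
    (prefixList x k).getD j false = decide (x j = 1) := by
  simp [prefixList, h]

lemma sepConsistent_prefixList_chi {r : Baire} (hr : r ∈ SEP.dom) (k : ℕ) :
    SepConsistent r (prefixList (chi (rangeM (pfst r))) k) := by
  intro j hj i _
  rw [length_prefixList] at hj
  rw [prefixList_getD hj]
  refine ⟨fun h => decide_eq_true (chi_eq_one_iff.2 ⟨i, h⟩), fun h => decide_eq_false ?_⟩
  have : j ∉ rangeM (pfst r) := fun hp => (eq_empty_iff_forall_notMem.1 hr) j ⟨hp, i, h⟩
  simp [chi_apply, this]

lemma infinite_sepTree {r : Baire} (hr : r ∈ SEP.dom) :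
    {w : List Bool | sepTree r (wordCode w) = 1}.Infinite :=
  infinite_of_injective_forall_mem (f := prefixList (chi (rangeM (pfst r))))
    (fun a b hab => by simpa using congrArg List.length hab)
    fun k => sepTree_wordCode_eq_one.2 (sepConsistent_prefixList_chi hr k)

lemma mem_SEP_sol_of_mem_WKL_sol {r x : Baire} (hx : x ∈ WKL.sol (sepTree r)) :
    x ∈ SEP.sol r := by
  obtain ⟨hle, hpath⟩ := hx
  have hcons : ∀ j i, SepConsistent r (prefixList x (max j i + 1)) :=
    fun j i => sepTree_wordCode_eq_one.1 (hpath _)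
  refine ⟨{n | x n = 1}, funext fun n => ?_, fun j ⟨i, hi⟩ => ?_, fun j hj ⟨i, hi⟩ => ?_⟩
  · have := hle n
    simp only [chi_apply, mem_ofPred_eq]
    split_ifs <;> omega
  · have := (hcons j i j (by simp) i (by simp)).1 hi
    rwa [prefixList_getD (by omega), decide_eq_true_iff] at this
  · have := (hcons j i j (by simp) i (by simp)).2 hi
    rw [prefixList_getD (by omega), decide_eq_false_iff_not] at this
    exact this hj

lemma wRed_SEP_WKL : WRed SEP WKL :=
  WRed.of_continuous continuous_sepTree continuous_id fun r hr =>
    ⟨⟨isTreeCode_sepTree r, infinite_sepTree hr⟩, fun _ => mem_SEP_sol_of_mem_WKL_sol⟩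

def DiesFirst (t : Baire) (b : Bool) (m k : ℕ) : Prop :=
  DiesAt t (wordDecode m ++ [b]) k ∧ ¬ DiesAt t (wordDecode m ++ [!b]) k

noncomputable def firstDeaths (t : Baire) : Baire :=
  pairB (existsEnum (DiesFirst t false)) (existsEnum (DiesFirst t true))

lemma continuous_firstDeaths : Continuous firstDeaths := by
  have hdies : ∀ b, Continuous fun t => existsEnum (DiesFirst t b) := fun b =>
    continuous_existsEnum fun m k => (isLocallyConstant_diesAt _ k).comp₂
      (isLocallyConstant_diesAt _ k) fun d d' => d ∧ ¬ d'
  exact (hdies false).pairB (hdies true)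

lemma rangeM_firstDeaths_disjoint {t : Baire} (ht : isTreeCode t) :
    rangeM (pfst (firstDeaths t)) ∩ rangeM (psnd (firstDeaths t)) = ∅ := by
  simp only [firstDeaths, pfst_pairB, psnd_pairB, rangeM_existsEnum]
  refine eq_empty_iff_forall_notMem.2 fun m ⟨⟨k, h₀, h₁⟩, ⟨k', h₁', h₀'⟩⟩ => ?_
  rcases le_total k k' with hk | hk
  exacts [h₀' (h₀.mono ht hk), h₁ (h₁'.mono ht hk)]

lemma Alive.wordCode_mem_rangeM_diesFirst {t : Baire} {w : List Bool} (ht : isTreeCode t)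
    (hw : Alive t w) {b : Bool} (hb : ¬ Alive t (w ++ [b])) :
    wordCode w ∈ rangeM (existsEnum (DiesFirst t b)) := by
  have hsibling : Alive t (w ++ [!b]) := by
    cases b <;> simpa [hb] using hw.child ht
  obtain ⟨k, hk⟩ : ∃ k, DiesAt t (w ++ [b]) k := by simpa [Alive] using hb
  exact (rangeM_existsEnum _).symm ▸ ⟨k, by simpa [DiesFirst] using ⟨hk, hsibling k⟩⟩

lemma wRed_WKL_SEP : WRed WKL SEP := by
  refine WRed.of_continuous continuous_firstDeaths (continuous_greedyPath_apply wordCode)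
    fun t ⟨ht, hinf⟩ => ⟨rangeM_firstDeaths_disjoint ht, ?_⟩
  rintro _ ⟨A, rfl, hfalse, htrue⟩
  simp only [firstDeaths, pfst_pairB, psnd_pairB] at hfalse htrue
  refine greedyPath_mem_WKL_sol (alive_nil ht hinf) fun w hw => ?_
  simp only [chi_ne_zero_iff]
  by_cases hA : wordCode w ∈ A
  · simp only [hA, decide_true]
    by_contra h
    exact htrue hA (hw.wordCode_mem_rangeM_diesFirst ht h)
  · simp only [hA, decide_false]
    by_contra h
    exact hA (hfalse (hw.wordCode_mem_rangeM_diesFirst ht h))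

/-- `SEP ≡_W WKL ≤_W EC ≡_W lim`. -/
theorem SEP_WKL_EC_lim : WEquiv SEP WKL ∧ WRed WKL EC ∧ WEquiv EC limP :=
  ⟨⟨wRed_SEP_WKL, wRed_WKL_SEP⟩, wRed_WKL_EC, ⟨wRed_EC_limP, wRed_limP_EC⟩⟩
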